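/- Let $\delta \geq 2$, $\Delta \geq 4$ be integers, and let $F(x,y)$ be defined as $F(x, y) = \frac{(1 - ax)(1 - bx)}{1 - cx} - \frac{(1 - ay)(1 - dy)}{1 - cy}$ where $a = \frac{4\delta-4}{\delta}$, $b = \frac{6}{\Delta}$, $d = \frac{4\Delta-6}{\Delta}$, $c = a - \frac{2}{\Delta}$. For fixed $x$, the map $y \mapsto F(x, y)$ is monotonically increasing on $\left[0, \min\left\{\frac{1}{a}, \frac{1}{d}\right\}\right]$. -/
import Mathlib


theorem stmt_13 (δ Δ : ℕ) (hδ : 2 ≤ δ) (hΔ : 4 ≤ Δ)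
    (a b c d : ℝ) (ha : a = (4 * (δ : ℝ) - 4) / δ) (hb : b = 6 / (Δ : ℝ))
    (hd : d = (4 * (Δ : ℝ) - 6) / Δ) (hc : c = a - 2 / Δ)
    (F : ℝ → ℝ → ℝ)
    (hF : ∀ x y, F x y = (1 - a * x) * (1 - b * x) / (1 - c * x)
      - (1 - a * y) * (1 - d * y) / (1 - c * y)) (x : ℝ) :
    MonotoneOn (fun y => F x y) (Set.Icc 0 (min (1 / a) (1 / d))) := by
  have hδ' : (2:ℝ) ≤ δ := by exact_mod_cast hδ
  have hΔ' : (4:ℝ) ≤ Δ := by exact_mod_cast hΔ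
  have hδpos : (0:ℝ) < δ := by linarith
  have hΔpos : (0:ℝ) < Δ := by linarith
  have ha2 : (2:ℝ) ≤ a := by
    rw [ha, le_div_iff₀ hδpos]; linarith
  have ha0 : (0:ℝ) < a := by linarith
  have hΔdiv : 2 / (Δ:ℝ) ≤ 1/2 := by
    rw [div_le_div_iff₀ hΔpos (by norm_num)]; linarith
  have hΔdivpos : 0 < 2 / (Δ:ℝ) := by positivity
  have hca : c < a := by rw [hc]; linarith
  have hc0 : 0 < c := by rw [hc]; linarith
  have hd0 : 0 < d := by
    rw [hd]; apply div_pos (by linarith) hΔpos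
  intro y₁ h₁ y₂ h₂ h12
  obtain ⟨h10, h1m⟩ := h₁
  obtain ⟨h20, h2m⟩ := h₂
  have h1a : a * y₁ ≤ 1 := by
    have := le_trans h1m (min_le_left _ _)
    calc a * y₁ ≤ a * (1/a) := by nlinarith
    _ = 1 := by field_simp
  have h2a : a * y₂ ≤ 1 := by
    have := le_trans h2m (min_le_left _ _)
    calc a * y₂ ≤ a * (1/a) := by nlinarith
    _ = 1 := by field_simp
  have h1d : d * y₁ ≤ 1 := by
    have := le_trans h1m (min_le_right _ _)
    calc d * y₁ ≤ d * (1/d) := by nlinarith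
    _ = 1 := by field_simp
  have h2d : d * y₂ ≤ 1 := by
    have := le_trans h2m (min_le_right _ _)
    calc d * y₂ ≤ d * (1/d) := by nlinarith
    _ = 1 := by field_simp
  have hlt : c * (1/a) < 1 := by rw [mul_one_div]; exact (div_lt_one ha0).2 hca
  have h1c : 0 < 1 - c * y₁ := by
    have := mul_le_mul_of_nonneg_left (le_trans h1m (min_le_left _ _)) hc0.le
    linarith
  have h2c : 0 < 1 - c * y₂ := by
    have := mul_le_mul_of_nonneg_left (le_trans h2m (min_le_left _ _)) hc0.le
    linarith
  simp only [hF]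
  apply sub_le_sub_left
  rw [div_le_div_iff₀ h2c h1c]
  nlinarith [mul_nonneg (sub_nonneg.2 h12) (mul_nonneg (by linarith : (0:ℝ) ≤ a - c) (by linarith : (0:ℝ) ≤ 1 - d * y₂)),
    mul_nonneg (sub_nonneg.2 h12) (mul_nonneg (mul_nonneg hd0.le (by linarith : (0:ℝ) ≤ 1 - a * y₁)) h2c.le)]
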